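/- For the 4-point fully right-decentered Lagrange interpolatory scheme S₄, one has the contractivity estimate sup_k |D(S₄(f))_k| ≤ (1/2)·sup_k |Df_k| for every bounded sequence f. -/

import Mathlib

/-- Second difference operator. -/
def D (f : ℤ → ℝ) (n : ℤ) : ℝ := f (n + 1) - 2 * f n + f (n - 1)

/-- The fully right-decentered 4-point Lagrange interpolatory subdivision scheme:
`S₄(f)_{2n} = f_n`, `S₄(f)_{2n+1} = (f_n+f_{n+1})/2 - (3/16)Df_{n+1} + (1/16)Df_{n+2}`. -/
noncomputable def S4 (f : ℤ → ℝ) (k : ℤ) : ℝ :=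
  if k % 2 = 0 then f (k / 2)
  else (f (k / 2) + f (k / 2 + 1)) / 2 - (3 / 16) * D f (k / 2 + 1) + (1 / 16) * D f (k / 2 + 2)

/-!
On even indices `S4 f` reproduces `f`, so the second differences of `S4 f` are explicit
combinations of consecutive second differences of `f`:
`D (S4 f) (2n) = 5/16 Df_n - 1/8 Df_{n+1} + 1/16 Df_{n+2}` and
`D (S4 f) (2n+1) = 3/8 Df_{n+1} - 1/8 Df_{n+2}`.
In both cases the absolute values of the coefficients sum to `1/2`.
-/

section SecondDifference

variable {f : ℤ → ℝ}

lemma abs_D_le_of_abs_le {C : ℝ} (hC : ∀ n, |f n| ≤ C) (n : ℤ) : |D f n| ≤ 4 * C := by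
  have hnext := abs_le.mp (hC (n + 1))
  have hcur := abs_le.mp (hC n)
  have hprev := abs_le.mp (hC (n - 1))
  rw [D, abs_le]
  constructor <;> linarith

lemma bddAbove_range_abs_D {C : ℝ} (hC : ∀ n, |f n| ≤ C) :
    BddAbove (Set.range fun n => |D f n|) :=
  ⟨4 * C, Set.forall_mem_range.mpr (abs_D_le_of_abs_le hC)⟩

end SecondDifference

section S4

variable (f : ℤ → ℝ) (n : ℤ)

lemma S4_two_mul : S4 f (2 * n) = f n := by
  simp [S4]

lemma S4_two_mul_add_one :
    S4 f (2 * n + 1) = (f n + f (n + 1)) / 2 - 3 / 16 * D f (n + 1) + 1 / 16 * D f (n + 2) := by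
  have hmod : (2 * n + 1) % 2 = 1 := by omega
  have hdiv : (2 * n + 1) / 2 = n := by omega
  simp [S4, hmod, hdiv]

lemma D_S4_two_mul :
    D (S4 f) (2 * n) = 5 / 16 * D f n - 1 / 8 * D f (n + 1) + 1 / 16 * D f (n + 2) := by
  have hprev : 2 * n - 1 = 2 * (n - 1) + 1 := by ring
  rw [D, hprev, S4_two_mul_add_one, S4_two_mul, S4_two_mul_add_one]
  simp only [D]
  ring_nf

lemma D_S4_two_mul_add_one :
    D (S4 f) (2 * n + 1) = 3 / 8 * D f (n + 1) - 1 / 8 * D f (n + 2) := by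
  have hnext : 2 * n + 1 + 1 = 2 * (n + 1) := by ring
  rw [D, hnext, add_sub_cancel_right, S4_two_mul, S4_two_mul_add_one, S4_two_mul]
  simp only [D]
  ring_nf

variable {f} in
lemma abs_D_S4_le {M : ℝ} (hM : ∀ n, |D f n| ≤ M) (k : ℤ) : |D (S4 f) k| ≤ 1 / 2 * M := by
  rcases Int.even_or_odd' k with ⟨n, rfl | rfl⟩
  · rw [D_S4_two_mul, abs_le]
    have h₀ := abs_le.mp (hM n)
    have h₁ := abs_le.mp (hM (n + 1))
    have h₂ := abs_le.mp (hM (n + 2))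
    constructor <;> linarith
  · rw [D_S4_two_mul_add_one, abs_le]
    have h₁ := abs_le.mp (hM (n + 1))
    have h₂ := abs_le.mp (hM (n + 2))
    constructor <;> linarith

end S4

theorem S4_contractive (f : ℤ → ℝ) (hf : ∃ C, ∀ n, |f n| ≤ C) :
    (⨆ k, |D (S4 f) k|) ≤ (1 / 2) * ⨆ k, |D f k| := by
  obtain ⟨C, hC⟩ := hf
  -- without this bound `⨆ k, |D f k|` would be the junk value `0`
  have hDf_le_iSup : ∀ n, |D f n| ≤ ⨆ k, |D f k| := le_ciSup (bddAbove_range_abs_D hC)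
  exact ciSup_le (abs_D_S4_le hDf_le_iSup)
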